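/- arXiv:math/0505283 — 6 statements merged into one kernel-verified Lean document; each statement's English description precedes it below -/
import Mathlib

section
/- Fix reals γ > 0, τ₀ ≥ 4, and μ₀ = 1/8. The set of μ ∈ [0, μ₀] for which there exist a nonzero integer n and an integer m ≥ 2 with |(1+μ)|n| − √(m⁴+μ)| < γ |n|^{−τ₀} has Lebesgue measure at most C·γ for an absolute constant C. (Key step: the bad set for each pair (n,m) is an interval of length at most 2γ|n|^{−τ₀}/(|n|/2), and the condition forces m ≤ c√|n| for an absolute constant c.) -/
open MeasureTheory

/-- The bad set for a single pair `(k, m)` (with `k = |n|`). -/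
def badSet (γ τ₀ : ℝ) (k m : ℕ) : Set ℝ :=
  {μ : ℝ | μ ∈ Set.Icc (0:ℝ) (1/8) ∧ 1 ≤ k ∧ 2 ≤ m ∧
    |(1 + μ) * (k:ℝ) - Real.sqrt ((m:ℝ)^4 + μ)| < γ * (k:ℝ) ^ (-τ₀)}

lemma sqrt_ge_four {m : ℕ} (hm : 2 ≤ m) {μ : ℝ} (hμ : 0 ≤ μ) :
    4 ≤ Real.sqrt ((m:ℝ)^4 + μ) := by
  have h16 : (16:ℝ) ≤ (m:ℝ)^4 + μ := by
    have h2 : (2:ℝ) ≤ (m:ℝ) := by exact_mod_cast hm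
    have hsq : 4 ≤ (m:ℝ)^2 := by nlinarith
    have : 16 ≤ (m:ℝ)^4 := by nlinarith
    linarith
  calc (4:ℝ) = Real.sqrt 16 := by
        rw [show (16:ℝ) = 4^2 by norm_num, Real.sqrt_sq (by norm_num)]
    _ ≤ _ := Real.sqrt_le_sqrt h16

/-- Diameter bound for the bad set. -/
lemma badSet_dist {γ τ₀ : ℝ} (hγ : 0 < γ) {k m : ℕ} {μ₁ μ₂ : ℝ}
    (h₁ : μ₁ ∈ badSet γ τ₀ k m) (h₂ : μ₂ ∈ badSet γ τ₀ k m) (hle : μ₁ ≤ μ₂) :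
    μ₂ - μ₁ ≤ 4 * γ * (k:ℝ) ^ (-τ₀ - 1) := by
  obtain ⟨⟨h10, h18⟩, hk, hm, hf1⟩ := h₁
  obtain ⟨⟨h20, h28⟩, -, -, hf2⟩ := h₂
  have hkR : (1:ℝ) ≤ (k:ℝ) := by exact_mod_cast hk
  set s₁ := Real.sqrt ((m:ℝ)^4 + μ₁) with hs₁
  set s₂ := Real.sqrt ((m:ℝ)^4 + μ₂) with hs₂
  have hm2 : (2:ℝ) ≤ (m:ℝ) := by exact_mod_cast hm
  have hsq1 : s₁^2 = (m:ℝ)^4 + μ₁ := Real.sq_sqrt (by positivity)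
  have hsq2 : s₂^2 = (m:ℝ)^4 + μ₂ := Real.sq_sqrt (by positivity)
  have hs14 : 4 ≤ s₁ := sqrt_ge_four hm h10
  have hs24 : 4 ≤ s₂ := sqrt_ge_four hm h20
  -- sqrt is 1/8-Lipschitz here
  have hlip : s₂ - s₁ ≤ (μ₂ - μ₁) / 8 := by nlinarith
  set ε := γ * (k:ℝ) ^ (-τ₀) with hε
  have hεpos : 0 < ε := mul_pos hγ (Real.rpow_pos_of_pos (by linarith) _)
  have e1 : |(1 + μ₁) * (k:ℝ) - s₁| < ε := hf1
  have e2 : |(1 + μ₂) * (k:ℝ) - s₂| < ε := hf2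
  rw [abs_lt] at e1 e2
  -- (μ₂ - μ₁) * k < 2ε + (s₂ - s₁) ≤ 2ε + (μ₂-μ₁)/8 ≤ 2ε + (μ₂-μ₁)k/8
  have key : (μ₂ - μ₁) * (k:ℝ) ≤ 4 * ε := by nlinarith
  have hkpos : (0:ℝ) < (k:ℝ) := by linarith
  have hrw : (k:ℝ) ^ (-τ₀ - 1) * (k:ℝ) = (k:ℝ) ^ (-τ₀) := by
    have h := Real.rpow_add hkpos (-τ₀ - 1) 1
    simpa [Real.rpow_one] using h.symm
  have : (μ₂ - μ₁) ≤ 4 * ε / (k:ℝ) := by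
    rw [le_div_iff₀ hkpos]; exact key
  calc μ₂ - μ₁ ≤ 4 * ε / (k:ℝ) := this
    _ = 4 * γ * (k:ℝ) ^ (-τ₀ - 1) := by
        rw [hε, ← hrw]; field_simp

lemma badSet_volume {γ τ₀ : ℝ} (hγ : 0 < γ) (k m : ℕ) :
    volume (badSet γ τ₀ k m) ≤ ENNReal.ofReal (4 * γ * (k:ℝ) ^ (-τ₀ - 1)) := by
  refine (Real.volume_le_diam _).trans ?_
  refine EMetric.diam_le fun x hx y hy => ?_
  rw [edist_dist]
  refine ENNReal.ofReal_le_ofReal ?_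
  rw [Real.dist_eq, abs_le]
  rcases le_total x y with h | h
  · constructor
    · have := badSet_dist hγ hx hy h
      have hnn : (0:ℝ) ≤ 4 * γ * (k:ℝ) ^ (-τ₀ - 1) := by positivity
      linarith
    · have := badSet_dist hγ hx hy h; linarith
  · constructor
    · have := badSet_dist hγ hy hx h
      have hnn : (0:ℝ) ≤ 4 * γ * (k:ℝ) ^ (-τ₀ - 1) := by positivity
      linarith
    · have := badSet_dist hγ hy hx h; linarith

lemma badSet_empty {γ τ₀ : ℝ} (hγ : 0 < γ) (hγ8 : γ ≤ 1/8) (hτ : 4 ≤ τ₀) {k m : ℕ}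
    (hm : 2 * k < m) : badSet γ τ₀ k m = ∅ := by
  ext μ
  simp only [badSet, Set.mem_setOf_eq, Set.mem_empty_iff_false, iff_false, not_and]
  rintro ⟨h0, h8⟩ hk hm2 habs
  have hkR : (1:ℝ) ≤ (k:ℝ) := by exact_mod_cast hk
  have hrpow : (k:ℝ) ^ (-τ₀) ≤ 1 :=
    Real.rpow_le_one_of_one_le_of_nonpos hkR (by linarith)
  have hε : γ * (k:ℝ) ^ (-τ₀) ≤ 1/8 := by
    calc γ * (k:ℝ) ^ (-τ₀) ≤ γ * 1 := by
          exact mul_le_mul_of_nonneg_left hrpow (by linarith)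
      _ ≤ 1/8 := by linarith
  rw [abs_lt] at habs
  have hm2R : (2:ℝ) ≤ (m:ℝ) := by exact_mod_cast hm2
  have hsq : ((m:ℝ)^2)^2 = (m:ℝ)^4 := by ring
  have h1 : (m:ℝ)^2 ≤ Real.sqrt ((m:ℝ)^4 + μ) := by
    rw [show (m:ℝ)^2 = Real.sqrt (((m:ℝ)^2)^2) from (Real.sqrt_sq (by positivity)).symm]
    exact Real.sqrt_le_sqrt (by nlinarith)
  have h2 : (m:ℝ) ≤ (m:ℝ)^2 := by nlinarith
  -- sqrt < (1+μ)k + ε ≤ (10/8) k ≤ 2k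
  have h3 : Real.sqrt ((m:ℝ)^4 + μ) < 2 * (k:ℝ) := by nlinarith
  have : (m:ℝ) ≤ 2 * (k:ℝ) := by linarith
  have : m ≤ 2 * k := by exact_mod_cast this
  omega

lemma sum_inv_sq_le (n : ℕ) : ∑ i ∈ Finset.range n, (1:ℝ) / (i:ℝ)^2 ≤ 2 := by
  have key : ∀ q : ℕ, ∑ i ∈ Finset.range (q+2), (1:ℝ)/(i:ℝ)^2 ≤ 2 - 1/(q+1) := by
    intro q
    induction q with
    | zero => norm_num [Finset.sum_range_succ]
    | succ p ih2 =>
      rw [Finset.sum_range_succ]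
      have hp : (0:ℝ) < (p:ℝ) + 1 := by positivity
      have hp2 : (0:ℝ) < (p:ℝ) + 2 := by positivity
      have h1 : (1:ℝ)/(((p:ℕ)+2:ℕ):ℝ)^2 ≤ 1/((p:ℝ)+1) - 1/((p:ℝ)+2) := by
        push_cast
        rw [div_sub_div _ _ (ne_of_gt hp) (ne_of_gt hp2)]
        rw [div_le_div_iff₀ (by positivity) (by positivity)]
        nlinarith
      have h2 : ((p:ℝ)+1+1) = ((p:ℝ)+2) := by ring
      push_cast at h1 ih2 ⊢
      rw [h2]
      linarith
  match n with
  | 0 => simp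
  | 1 => norm_num
  | (q+2) =>
    have := key q
    have hp : (0:ℝ) < (q:ℝ)+1 := by positivity
    have h1 : (0:ℝ) < 1/((q:ℝ)+1) := by positivity
    push_cast at this ⊢
    linarith

/-- Measure estimate for the set of masses `μ ∈ [0, 1/8]` violating the first
Diophantine condition: it has Lebesgue measure at most `C·γ`. -/
theorem measure_bad_mass_set :
    ∃ C : ℝ, 0 < C ∧ ∀ γ τ₀ : ℝ, 0 < γ → 4 ≤ τ₀ →
      volume {μ : ℝ | μ ∈ Set.Icc (0:ℝ) (1/8) ∧
          ∃ n : ℤ, n ≠ 0 ∧ ∃ m : ℕ, 2 ≤ m ∧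
            |(1 + μ) * |(n:ℝ)| - Real.sqrt ((m:ℝ)^4 + μ)| < γ * |(n:ℝ)| ^ (-τ₀)}
        ≤ ENNReal.ofReal (C * γ) := by
  refine ⟨24, by norm_num, fun γ τ₀ hγ hτ => ?_⟩
  rcases le_or_gt γ (1/8) with hγ8 | hγ8
  · -- main case
    have hsub : {μ : ℝ | μ ∈ Set.Icc (0:ℝ) (1/8) ∧
          ∃ n : ℤ, n ≠ 0 ∧ ∃ m : ℕ, 2 ≤ m ∧
            |(1 + μ) * |(n:ℝ)| - Real.sqrt ((m:ℝ)^4 + μ)| < γ * |(n:ℝ)| ^ (-τ₀)}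
        ⊆ ⋃ p : ℕ × ℕ, badSet γ τ₀ p.1 p.2 := by
      rintro μ ⟨hμ, n, hn, m, hm, habs⟩
      refine Set.mem_iUnion.2 ⟨(n.natAbs, m), hμ, Int.natAbs_pos.mpr hn, hm, ?_⟩
      have hcast : ((n.natAbs : ℕ) : ℝ) = |(n:ℝ)| := by
        rw [Nat.cast_natAbs, Int.cast_abs]
      rw [hcast]; exact habs
    refine (measure_mono hsub).trans ?_
    refine (measure_iUnion_le _).trans ?_
    rw [ENNReal.tsum_prod']
    -- bound inner sums
    have inner : ∀ k : ℕ, (∑' m : ℕ, volume (badSet γ τ₀ k m))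
        ≤ ENNReal.ofReal (12 * γ / (k:ℝ)^2) := by
      intro k
      rcases Nat.eq_zero_or_pos k with rfl | hk
      · have : ∀ m, badSet γ τ₀ 0 m = ∅ := fun m => by
          ext μ; simp [badSet]
        simp [this]
      · have hzero : ∀ m ∉ Finset.range (2*k+1), volume (badSet γ τ₀ k m) = 0 := by
          intro m hmem
          rw [badSet_empty hγ hγ8 hτ (by simp at hmem; omega)]
          simp
        rw [tsum_eq_sum hzero]
        have hbd : ∀ m ∈ Finset.range (2*k+1),
            volume (badSet γ τ₀ k m) ≤ ENNReal.ofReal (4 * γ * (k:ℝ) ^ (-τ₀ - 1)) :=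
          fun m _ => badSet_volume hγ k m
        refine (Finset.sum_le_sum hbd).trans ?_
        rw [Finset.sum_const, Finset.card_range, nsmul_eq_mul]
        have hkR : (1:ℝ) ≤ (k:ℝ) := by exact_mod_cast hk
        have hkpos : (0:ℝ) < (k:ℝ) := by linarith
        have hnat : ((2*k+1 : ℕ) : ENNReal) = ENNReal.ofReal ((2*k+1 : ℕ) : ℝ) := by
          rw [ENNReal.ofReal_natCast]
        rw [hnat, ← ENNReal.ofReal_mul (by positivity)]
        refine ENNReal.ofReal_le_ofReal ?_
        -- (2k+1) * (4γ k^{-τ₀-1}) ≤ 12 γ / k²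
        have h3k : ((2*k+1 : ℕ) : ℝ) ≤ 3 * (k:ℝ) := by push_cast; linarith
        have hr1 : (k:ℝ) ^ (-τ₀ - 1) ≤ (k:ℝ) ^ (-(3:ℝ)) :=
          Real.rpow_le_rpow_of_exponent_le hkR (by linarith)
        have hr2 : (k:ℝ) ^ (-(3:ℝ)) = 1 / (k:ℝ)^3 := by
          rw [show (3:ℝ) = ((3:ℕ):ℝ) by norm_num, Real.rpow_neg (le_of_lt hkpos),
            Real.rpow_natCast, one_div]
        have hrpos : (0:ℝ) < (k:ℝ) ^ (-τ₀ - 1) := Real.rpow_pos_of_pos hkpos _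
        have step : ((2*k+1 : ℕ) : ℝ) * (4 * γ * (k:ℝ) ^ (-τ₀ - 1))
            ≤ 3 * (k:ℝ) * (4 * γ * (1 / (k:ℝ)^3)) := by
          have := mul_le_mul h3k (mul_le_mul_of_nonneg_left (hr1.trans_eq hr2)
            (by positivity : (0:ℝ) ≤ 4 * γ)) (by positivity) (by positivity)
          linarith
        refine step.trans (le_of_eq ?_)
        field_simp
        ring
    refine (ENNReal.tsum_le_tsum inner).trans ?_
    refine ENNReal.tsum_le_of_sum_range_le ?_
    intro n
    rw [← ENNReal.ofReal_sum_of_nonneg (fun i _ => by positivity)]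
    refine ENNReal.ofReal_le_ofReal ?_
    have : ∑ i ∈ Finset.range n, 12 * γ / (i:ℝ)^2
        = 12 * γ * ∑ i ∈ Finset.range n, 1 / (i:ℝ)^2 := by
      rw [Finset.mul_sum]; congr 1; ext i; ring
    rw [this]
    have := sum_inv_sq_le n
    nlinarith
  · -- trivial case: γ large
    refine (measure_mono (fun μ hμ => hμ.1)).trans ?_
    rw [Real.volume_Icc]
    refine ENNReal.ofReal_le_ofReal ?_
    linarith
end

section
/- Let n be a nonzero integer, m a positive integer, μ ∈ [0,1/8], and ν a real with |ν| bounded so that |n ν| ≤ ε₀|n| with ε₀ ≤ 1/16. Suppose |ω₁|n| − m²| > 1 + ε₀|n| where ω₁ = √(1+μ). Then for any Ω with |Ω − ω₁| ≤ ε₀ one has ||Ω n| − √(m⁴ + μ + n ν)| ≥ 1/8. -/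
set_option maxHeartbeats 1000000

/-- Lemma 2 of the paper: if `(n, m)` is far from resonance, i.e.
`|ω₁|n| − m²| > 1 + ε₀|n|`, then the small divisor is at least `1/8`. -/
theorem small_divisor_lower_bound (n : ℤ) (hn : n ≠ 0) (m : ℕ) (hm : 0 < m)
    (μ ε₀ ν Ω : ℝ)
    (hμ0 : 0 ≤ μ) (hμ1 : μ ≤ 1/8) (hε₀pos : 0 < ε₀) (hε₀ : ε₀ ≤ 1/16)
    (hν : |ν| ≤ ε₀) (hpos : 0 < (m:ℝ)^4 + μ + (n:ℝ) * ν)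
    (hfar : |Real.sqrt (1 + μ) * |(n:ℝ)| - (m:ℝ)^2| > 1 + ε₀ * |(n:ℝ)|)
    (hΩ : |Ω - Real.sqrt (1 + μ)| ≤ ε₀) :
    abs (|Ω * (n:ℝ)| - Real.sqrt ((m:ℝ)^4 + μ + (n:ℝ) * ν)) ≥ 1/8 := by
  by_contra hcon
  push_neg at hcon
  set w := Real.sqrt (1 + μ) with hwdef
  set S := Real.sqrt ((m:ℝ)^4 + μ + (n:ℝ) * ν) with hSdef
  set N := |(n:ℝ)| with hNdef
  have hN : 1 ≤ N := by
    have h1 : (1:ℤ) ≤ |n| := Int.one_le_abs hn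
    rw [hNdef, ← Int.cast_abs]
    exact_mod_cast h1
  have hw0 : 0 ≤ w := Real.sqrt_nonneg _
  have hS0 : 0 ≤ S := Real.sqrt_nonneg _
  have hw2 : w ^ 2 = 1 + μ := Real.sq_sqrt (by linarith)
  have hS2 : S ^ 2 = (m:ℝ)^4 + μ + (n:ℝ) * ν := Real.sq_sqrt hpos.le
  have hw1 : 1 ≤ w := by nlinarith
  have hm1 : (1:ℝ) ≤ (m:ℝ)^2 := by
    have : (1:ℝ) ≤ (m:ℝ) := by exact_mod_cast hm
    nlinarith
  have hA : |Ω * (n:ℝ)| = |Ω| * N := abs_mul Ω (n:ℝ)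
  clear_value w S N
  have hΩw : abs (|Ω| - w) ≤ ε₀ := by
    have h := abs_abs_sub_abs_le_abs_sub Ω w
    rw [abs_of_nonneg hw0] at h
    exact h.trans hΩ
  have hΩw' := abs_le.mp hΩw
  have hnu : |(n:ℝ) * ν| ≤ ε₀ * N := by
    rw [abs_mul, mul_comm]
    exact mul_le_mul hν hNdef.ge (abs_nonneg _) hε₀pos.le
  have hnu' := abs_le.mp hnu
  rw [hA] at hcon
  have h8 := abs_lt.mp hcon
  have hεN : ε₀ * N ≤ N / 16 := by nlinarith
  -- lower bound for S
  have hSlb : (15/16) * N - 1/8 ≤ S := by nlinarith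
  -- |S - m²| ≤ 7/8
  have heq : (S - (m:ℝ)^2) * (S + (m:ℝ)^2) = μ + (n:ℝ) * ν := by
    linear_combination hS2
  have hsum : 15/16 * N + 7/8 ≤ S + (m:ℝ)^2 := by linarith
  have hd1 : S - (m:ℝ)^2 ≤ 7/8 := by
    by_contra hc
    push_neg at hc
    have hb : (7/8 : ℝ) * (15/16 * N + 7/8) ≤ (S - (m:ℝ)^2) * (S + (m:ℝ)^2) :=
      mul_le_mul hc.le hsum (by linarith) (by linarith)
    linarith [heq ▸ hb]
  have hd2 : (m:ℝ)^2 - S ≤ 7/8 := by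
    by_contra hc
    push_neg at hc
    have hb : (7/8 : ℝ) * (15/16 * N + 7/8) ≤ ((m:ℝ)^2 - S) * (S + (m:ℝ)^2) :=
      mul_le_mul hc.le hsum (by linarith) (by linarith)
    have heq2 : ((m:ℝ)^2 - S) * (S + (m:ℝ)^2) = -(μ + (n:ℝ) * ν) := by
      linear_combination -hS2
    linarith [heq2 ▸ hb]
  have hfinal : |w * N - (m:ℝ)^2| ≤ 1 + ε₀ * N := by
    rw [abs_le]
    constructor <;> nlinarith
  linarith [hfar, hfinal]
end

section
/- Let A ≥ 2 be an integer. Then ∑_{n ≥ 1, n ≠ A} 1/(|A − n| · n²) ≤ C/A · (1 + log A) for some absolute constant C; in particular there is an absolute constant C₃ with ∑_{n≥1, n≠A} 1/(|A−n| n²) ≤ C₃ (log A + 1)/A. -/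
open scoped Classical

/-- Summation estimate A4.4 (with a logarithmic factor):
`∑_{n ≥ 1, n ≠ A} 1/(|A − n| n²) ≤ C₃ (log A + 1)/A`. -/
theorem sum_inverse_abs_estimate :
    ∃ C₃ : ℝ, 0 < C₃ ∧ ∀ A : ℕ, 2 ≤ A →
      (∑' n : ℕ, if n = 0 ∨ n = A then 0 else 1 / (|(A:ℝ) - (n:ℝ)| * (n:ℝ)^2))
        ≤ C₃ * (Real.log A + 1) / A := by
  refine ⟨6, by norm_num, fun A hA => ?_⟩
  have ha2 : (2:ℝ) ≤ (A:ℝ) := by exact_mod_cast hA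
  have ha0 : (0:ℝ) < (A:ℝ) := by linarith
  set f : ℕ → ℝ := fun n => if n = 0 ∨ n = A then 0 else 1 / (|(A:ℝ) - (n:ℝ)| * (n:ℝ)^2)
    with hf
  have hfnn : ∀ n, 0 ≤ f n := by
    intro n; simp only [hf]; split
    · exact le_refl 0
    · positivity
  have hmaj : ∀ n, f n ≤ 1 / (n:ℝ)^2 := by
    intro n
    simp only [hf]
    split
    · positivity
    · rename_i h
      push_neg at h
      obtain ⟨h0, hA'⟩ := h
      have hz : (1:ℤ) ≤ |(A:ℤ) - (n:ℤ)| :=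
        Int.one_le_abs (sub_ne_zero.mpr (by exact_mod_cast (Ne.symm hA')))
      have h1 : (1:ℝ) ≤ |(A:ℝ) - (n:ℝ)| := by
        have h2 : ((1:ℤ):ℝ) ≤ ((|(A:ℤ) - (n:ℤ)|:ℤ):ℝ) := by exact_mod_cast hz
        push_cast at h2
        simpa using h2
      have hn2 : (0:ℝ) < (n:ℝ)^2 := by
        have : 0 < n := Nat.pos_of_ne_zero h0
        positivity
      exact one_div_le_one_div_of_le hn2 (le_mul_of_one_le_left (le_of_lt hn2) h1)
  have hsummaj : Summable (fun n : ℕ => 1 / (n:ℝ)^2) :=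
    Real.summable_one_div_nat_pow.mpr one_lt_two
  have hsum : Summable f := Summable.of_nonneg_of_le hfnn hmaj hsummaj
  have hT : ∑' n : ℕ, 1 / (n:ℝ)^2 ≤ 2 := by
    rw [hasSum_zeta_two.tsum_eq]
    nlinarith [Real.pi_lt_d2, Real.pi_pos]
  -- tail bound
  have htail : ∑' n : ℕ, f (n + A) ≤ 2 / (A:ℝ) := by
    have hterm : ∀ n : ℕ, f (n + A) ≤ (1/(A:ℝ)) * (1 / (n:ℝ)^2) := by
      intro n
      simp only [hf]
      split
      · positivity
      · rename_i h
        push_neg at h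
        have hn : n ≠ 0 := by rintro rfl; exact h.2 (by simp)
        have hn1 : (1:ℝ) ≤ (n:ℝ) := by exact_mod_cast Nat.one_le_iff_ne_zero.mpr hn
        have habs : |(A:ℝ) - ((n + A : ℕ):ℝ)| = (n:ℝ) := by
          push_cast
          rw [show (A:ℝ) - ((n:ℝ) + (A:ℝ)) = -(n:ℝ) by ring, abs_neg,
            abs_of_nonneg (Nat.cast_nonneg n)]
        rw [habs]
        have hn0 : (0:ℝ) ≤ (n:ℝ) := Nat.cast_nonneg n
        have hkey : (A:ℝ) * (n:ℝ)^2 ≤ (n:ℝ) * (((n:ℝ) + (A:ℝ)))^2 := by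
          nlinarith [pow_nonneg hn0 3, mul_nonneg (sq_nonneg (n:ℝ)) ha0.le,
            mul_nonneg hn0 (sq_nonneg (A:ℝ))]
        have : (A:ℝ) * (n:ℝ)^2 ≤ (n:ℝ) * (((n + A : ℕ):ℝ))^2 := by push_cast; exact hkey
        calc 1 / ((n:ℝ) * (((n + A : ℕ):ℝ))^2) ≤ 1 / ((A:ℝ) * (n:ℝ)^2) := by
              apply one_div_le_one_div_of_le (by positivity) this
          _ = 1/(A:ℝ) * (1/(n:ℝ)^2) := by rw [div_mul_div_comm, one_mul]
    calc ∑' n : ℕ, f (n + A) ≤ ∑' n : ℕ, (1/(A:ℝ)) * (1 / (n:ℝ)^2) :=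
          Summable.tsum_le_tsum hterm ((summable_nat_add_iff A).mpr hsum) (hsummaj.mul_left _)
      _ = (1/(A:ℝ)) * ∑' n : ℕ, 1 / (n:ℝ)^2 := tsum_mul_left
      _ ≤ (1/(A:ℝ)) * 2 := by
          apply mul_le_mul_of_nonneg_left hT (by positivity)
      _ = 2 / (A:ℝ) := by ring
  -- harmonic bound
  have hH : ∑ i ∈ Finset.range A, (1:ℝ) / ((i:ℝ) + 1) ≤ 1 + Real.log A := by
    have h1 : ((harmonic A : ℚ) : ℝ) = ∑ i ∈ Finset.range A, (1:ℝ) / ((i:ℝ) + 1) := by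
      rw [harmonic]
      push_cast
      simp [one_div]
    rw [← h1]
    exact harmonic_le_one_add_log A
  have hSum1 : ∑ n ∈ Finset.range A, (1:ℝ) / ((A:ℝ) - (n:ℝ))
      = ∑ i ∈ Finset.range A, (1:ℝ) / ((i:ℝ) + 1) := by
    rw [← Finset.sum_range_reflect (fun j => (1:ℝ) / ((j:ℝ) + 1)) A]
    apply Finset.sum_congr rfl
    intro j hj
    rw [Finset.mem_range] at hj
    congr 1
    rw [Nat.cast_sub (by omega), Nat.cast_sub (by omega)]
    push_cast
    ring
  have hSum2 : ∑ n ∈ Finset.range A, (1:ℝ) / (n:ℝ)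
      ≤ ∑ i ∈ Finset.range A, (1:ℝ) / ((i:ℝ) + 1) := by
    obtain ⟨B, rfl⟩ : ∃ B, A = B + 1 := ⟨A - 1, by omega⟩
    rw [Finset.sum_range_succ' (fun n => (1:ℝ) / (n:ℝ)) B,
      Finset.sum_range_succ (fun i => (1:ℝ) / ((i:ℝ) + 1)) B]
    push_cast
    simp only [Nat.cast_zero, div_zero, add_zero]
    have : (0:ℝ) ≤ 1 / ((B:ℝ) + 1) := by positivity
    exact le_add_of_nonneg_right this
  have hSum3 : ∑ n ∈ Finset.range A, (1:ℝ) / (n:ℝ)^2 ≤ 2 :=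
    le_trans (Summable.sum_le_tsum (Finset.range A) (fun i _ => by positivity) hsummaj) hT
  -- finite part bound
  have hfin : ∑ n ∈ Finset.range A, f n
      ≤ (1/(A:ℝ)^2) * (2 * (1 + Real.log A)) + (1/(A:ℝ)) * 2 := by
    have hterm2 : ∀ n ∈ Finset.range A, f n
        ≤ (1/(A:ℝ)^2) * ((1:ℝ)/((A:ℝ) - (n:ℝ)) + 1/(n:ℝ)) + (1/(A:ℝ)) * (1/(n:ℝ)^2) := by
      intro n hn
      rw [Finset.mem_range] at hn
      have hlt : (n:ℝ) < (A:ℝ) := by exact_mod_cast hn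
      by_cases h0 : n = 0
      · subst h0
        simp only [hf, if_pos (Or.inl rfl)]
        push_cast
        rw [sub_zero]
        norm_num
        positivity
      · have hn1 : (0:ℝ) < (n:ℝ) := by exact_mod_cast Nat.pos_of_ne_zero h0
        have hne : ¬(n = 0 ∨ n = A) := by push_neg; exact ⟨h0, by omega⟩
        simp only [hf, if_neg hne]
        rw [abs_of_pos (by linarith)]
        apply le_of_eq
        have hA0 : (A:ℝ) ≠ 0 := ne_of_gt ha0
        have hAn : (A:ℝ) - (n:ℝ) ≠ 0 := by linarith
        field_simp
        ring
    calc ∑ n ∈ Finset.range A, f n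
        ≤ ∑ n ∈ Finset.range A, ((1/(A:ℝ)^2) * ((1:ℝ)/((A:ℝ) - (n:ℝ)) + 1/(n:ℝ))
            + (1/(A:ℝ)) * (1/(n:ℝ)^2)) := Finset.sum_le_sum hterm2
      _ = (1/(A:ℝ)^2) * (∑ n ∈ Finset.range A, (1:ℝ)/((A:ℝ) - (n:ℝ))
            + ∑ n ∈ Finset.range A, (1:ℝ)/(n:ℝ))
            + (1/(A:ℝ)) * ∑ n ∈ Finset.range A, (1:ℝ)/(n:ℝ)^2 := by
          rw [Finset.sum_add_distrib, ← Finset.mul_sum, ← Finset.mul_sum,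
            Finset.sum_add_distrib, mul_add]
      _ ≤ (1/(A:ℝ)^2) * ((1 + Real.log A) + (1 + Real.log A)) + (1/(A:ℝ)) * 2 := by
          have h1 : ∑ n ∈ Finset.range A, (1:ℝ)/((A:ℝ) - (n:ℝ)) ≤ 1 + Real.log A := by
            rw [hSum1]; exact hH
          have h2 : ∑ n ∈ Finset.range A, (1:ℝ)/(n:ℝ) ≤ 1 + Real.log A :=
            le_trans hSum2 hH
          have hp1 : (0:ℝ) ≤ 1/(A:ℝ)^2 := by positivity
          have hp2 : (0:ℝ) ≤ 1/(A:ℝ) := by positivity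
          apply add_le_add
          · exact mul_le_mul_of_nonneg_left (by linarith) hp1
          · exact mul_le_mul_of_nonneg_left hSum3 hp2
      _ = (1/(A:ℝ)^2) * (2 * (1 + Real.log A)) + (1/(A:ℝ)) * 2 := by ring
  -- combine
  have hsplit := Summable.sum_add_tsum_nat_add A hsum
  have hL : (0:ℝ) ≤ Real.log A := Real.log_nonneg (by linarith)
  calc (∑' n : ℕ, f n) = ∑ n ∈ Finset.range A, f n + ∑' n : ℕ, f (n + A) := hsplit.symm
    _ ≤ ((1/(A:ℝ)^2) * (2 * (1 + Real.log A)) + (1/(A:ℝ)) * 2) + 2 / (A:ℝ) :=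
        add_le_add hfin htail
    _ ≤ 6 * (Real.log A + 1) / (A:ℝ) := by
        set L := Real.log A
        have heq1 : (1/(A:ℝ)^2) * (2 * (1 + L)) + (1/(A:ℝ)) * 2 + 2 / (A:ℝ)
            = (2 * (1 + L) + 4 * (A:ℝ)) / (A:ℝ)^2 := by
          field_simp
          ring
        have heq2 : 6 * (L + 1) / (A:ℝ) = (6 * (L + 1) * (A:ℝ)) / (A:ℝ)^2 := by
          rw [eq_div_iff (by positivity)]
          field_simp
        rw [heq1, heq2]
        apply div_le_div_of_nonneg_right _ (by positivity)
        · nlinarith [mul_nonneg hL (by linarith : (0:ℝ) ≤ 6 * (A:ℝ) - 2)]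
end

section
/- Define v(m, m1, m2) = 4 m m1 m2 / (π (m² − (m1−m2)²)(m² − (m1+m2)²)) for positive integers with nonvanishing denominators. Then there is an absolute constant C such that for every positive integer m, ∑_{m1, m2 ≥ 1, denominators nonzero} |v(m, m1, m2)| / (m1³ m2³) ≤ C/m³. -/
open scoped Classical

noncomputable def Sconst : ℝ := ∑' k : ℤ, 1 / (k : ℝ) ^ 2

lemma summable_int_sq : Summable (fun k : ℤ => 1 / (k : ℝ) ^ 2) :=
  Real.summable_one_div_int_pow.2 one_lt_two

lemma Sconst_nonneg : 0 ≤ Sconst :=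
  tsum_nonneg (fun k => by positivity)

lemma lemA_summable (c : ℤ) : Summable (fun n : ℕ => 1 / ((c : ℝ) - n) ^ 2) := by
  have hinj : Function.Injective (fun n : ℕ => c - (n : ℤ)) := by
    intro a b h
    simp only [sub_right_inj, Int.natCast_inj] at h
    exact h
  have hfun : (fun n : ℕ => 1 / ((c : ℝ) - n) ^ 2)
      = (fun k : ℤ => 1 / (k : ℝ) ^ 2) ∘ (fun n : ℕ => c - (n : ℤ)) := by
    funext n
    simp only [Function.comp]
    push_cast
    ring
  rw [hfun]
  exact summable_int_sq.comp_injective hinj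

lemma lemA_tsum (c : ℤ) : ∑' n : ℕ, 1 / ((c : ℝ) - n) ^ 2 ≤ Sconst := by
  have hinj : Function.Injective (fun n : ℕ => c - (n : ℤ)) := by
    intro a b h
    simp only [sub_right_inj, Int.natCast_inj] at h
    exact h
  refine Summable.tsum_le_tsum_of_inj _ hinj (fun k _ => by positivity) (fun n => ?_)
    (lemA_summable c) summable_int_sq
  have : ((c - (n : ℤ) : ℤ) : ℝ) = (c : ℝ) - n := by push_cast; ring
  rw [this]

lemma nat_summable_sq : Summable (fun n : ℕ => 1 / (n : ℝ) ^ 2) := by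
  refine (lemA_summable 0).congr (fun n => ?_)
  rw [Int.cast_zero, zero_sub, neg_sq]

lemma nat_tsum_sq_le : ∑' n : ℕ, 1 / (n : ℝ) ^ 2 ≤ Sconst := by
  calc ∑' n : ℕ, 1 / (n : ℝ) ^ 2 = ∑' n : ℕ, 1 / (((0 : ℤ) : ℝ) - n) ^ 2 :=
        tsum_congr (fun n => by rw [Int.cast_zero, zero_sub, neg_sq])
    _ ≤ Sconst := lemA_tsum 0

noncomputable def Phi (m : ℕ) (q : ℕ × ℕ) : ℝ :=
  1 / (q.1 : ℝ) ^ 2 *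
    (1 / ((m : ℝ) + q.1 - q.2) ^ 2 + 1 / ((m : ℝ) - q.1 - q.2) ^ 2 + 2 / (q.2 : ℝ) ^ 2)

lemma Phi_nonneg (m : ℕ) (q : ℕ × ℕ) : 0 ≤ Phi m q := by
  unfold Phi; positivity

lemma psi_summable (m b : ℕ) :
    Summable (fun y : ℕ => 1 / ((m : ℝ) + b - y) ^ 2 + 1 / ((m : ℝ) - b - y) ^ 2
      + 2 / (y : ℝ) ^ 2) := by
  have h1 : Summable (fun y : ℕ => 1 / ((m : ℝ) + b - y) ^ 2) :=
    (lemA_summable ((m : ℤ) + b)).congr (fun y => by push_cast; ring)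
  have h2 : Summable (fun y : ℕ => 1 / ((m : ℝ) - b - y) ^ 2) :=
    (lemA_summable ((m : ℤ) - b)).congr (fun y => by push_cast; ring)
  have h3 : Summable (fun y : ℕ => 2 / (y : ℝ) ^ 2) :=
    (nat_summable_sq.mul_left 2).congr (fun y => by ring)
  exact (h1.add h2).add h3

lemma psi_tsum_le (m b : ℕ) :
    ∑' y : ℕ, (1 / ((m : ℝ) + b - y) ^ 2 + 1 / ((m : ℝ) - b - y) ^ 2 + 2 / (y : ℝ) ^ 2)
      ≤ 4 * Sconst := by
  have h1 : Summable (fun y : ℕ => 1 / ((m : ℝ) + b - y) ^ 2) :=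
    (lemA_summable ((m : ℤ) + b)).congr (fun y => by push_cast; ring)
  have h2 : Summable (fun y : ℕ => 1 / ((m : ℝ) - b - y) ^ 2) :=
    (lemA_summable ((m : ℤ) - b)).congr (fun y => by push_cast; ring)
  have h3 : Summable (fun y : ℕ => 2 / (y : ℝ) ^ 2) :=
    (nat_summable_sq.mul_left 2).congr (fun y => by ring)
  rw [Summable.tsum_add (h1.add h2) h3, Summable.tsum_add h1 h2]
  have e1 : ∑' y : ℕ, 1 / ((m : ℝ) + b - y) ^ 2 ≤ Sconst := by
    calc ∑' y : ℕ, 1 / ((m : ℝ) + b - y) ^ 2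
        = ∑' y : ℕ, 1 / ((((m : ℤ) + b : ℤ) : ℝ) - y) ^ 2 :=
          tsum_congr (fun y => by push_cast; ring_nf)
      _ ≤ Sconst := lemA_tsum _
  have e2 : ∑' y : ℕ, 1 / ((m : ℝ) - b - y) ^ 2 ≤ Sconst := by
    calc ∑' y : ℕ, 1 / ((m : ℝ) - b - y) ^ 2
        = ∑' y : ℕ, 1 / ((((m : ℤ) - b : ℤ) : ℝ) - y) ^ 2 :=
          tsum_congr (fun y => by push_cast; ring_nf)
      _ ≤ Sconst := lemA_tsum _
  have e3 : ∑' y : ℕ, 2 / (y : ℝ) ^ 2 ≤ 2 * Sconst := by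
    calc ∑' y : ℕ, 2 / (y : ℝ) ^ 2 = ∑' y : ℕ, 2 * (1 / (y : ℝ) ^ 2) :=
          tsum_congr (fun y => by ring)
      _ = 2 * ∑' y : ℕ, 1 / (y : ℝ) ^ 2 := tsum_mul_left
      _ ≤ 2 * Sconst := by linarith [nat_tsum_sq_le]
  linarith

lemma Phi_inner_summable (m b : ℕ) : Summable (fun y : ℕ => Phi m (b, y)) := by
  have := (psi_summable m b).mul_left (1 / (b : ℝ) ^ 2)
  exact this.congr (fun y => by simp [Phi])

lemma Phi_inner_tsum_le (m b : ℕ) :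
    ∑' y : ℕ, Phi m (b, y) ≤ 1 / (b : ℝ) ^ 2 * (4 * Sconst) := by
  have heq : ∑' y : ℕ, Phi m (b, y)
      = 1 / (b : ℝ) ^ 2 * ∑' y : ℕ, (1 / ((m : ℝ) + b - y) ^ 2
        + 1 / ((m : ℝ) - b - y) ^ 2 + 2 / (y : ℝ) ^ 2) := by
    rw [← tsum_mul_left]
    exact tsum_congr (fun y => by simp [Phi])
  rw [heq]
  exact mul_le_mul_of_nonneg_left (psi_tsum_le m b) (by positivity)

lemma Phi_outer_summable (m : ℕ) : Summable (fun b : ℕ => ∑' y : ℕ, Phi m (b, y)) := by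
  refine Summable.of_nonneg_of_le (fun b => tsum_nonneg fun y => Phi_nonneg m (b, y))
    (fun b => Phi_inner_tsum_le m b) ?_
  exact nat_summable_sq.mul_right (4 * Sconst)

lemma Phi_summable (m : ℕ) : Summable (Phi m) := by
  refine (summable_prod_of_nonneg (fun p => Phi_nonneg m p)).2 ⟨?_, ?_⟩
  · exact fun b => Phi_inner_summable m b
  · exact Phi_outer_summable m

lemma Phi_tsum_le (m : ℕ) : ∑' q : ℕ × ℕ, Phi m q ≤ 4 * Sconst * Sconst := by
  rw [Summable.tsum_prod' (Phi_summable m) (fun b => Phi_inner_summable m b)]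
  calc ∑' b : ℕ, ∑' y : ℕ, Phi m (b, y)
      ≤ ∑' b : ℕ, 1 / (b : ℝ) ^ 2 * (4 * Sconst) :=
        Summable.tsum_le_tsum (fun b => Phi_inner_tsum_le m b) (Phi_outer_summable m)
          (nat_summable_sq.mul_right (4 * Sconst))
    _ = (∑' b : ℕ, 1 / (b : ℝ) ^ 2) * (4 * Sconst) := tsum_mul_right
    _ ≤ Sconst * (4 * Sconst) :=
        mul_le_mul_of_nonneg_right nat_tsum_sq_le (by linarith [Sconst_nonneg])
    _ = 4 * Sconst * Sconst := by ring

lemma key_lemma {u v M : ℝ} (hu : 0 < u) (hv : 0 < v) (hM : 0 < M) (h : M ≤ 2 * (u + v)) :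
    1 / (u ^ 2 * v ^ 2) ≤ 16 / M ^ 2 * (1 / u ^ 2 + 1 / v ^ 2) := by
  have h16 : M ^ 2 ≤ 16 * (u ^ 2 + v ^ 2) := by
    nlinarith [mul_self_le_mul_self hM.le h, sq_nonneg (u - v)]
  have heq : 16 / M ^ 2 * (1 / u ^ 2 + 1 / v ^ 2)
      = 16 * (u ^ 2 + v ^ 2) / (M ^ 2 * (u ^ 2 * v ^ 2)) := by
    field_simp
    ring
  rw [heq, div_le_div_iff₀ (by positivity) (by positivity)]
  nlinarith [mul_le_mul_of_nonneg_left h16 (show (0:ℝ) ≤ u ^ 2 * v ^ 2 by positivity)]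

lemma core_real (M x y : ℝ) (hM : 1 ≤ M) (hx : 1 ≤ x) (hy : 1 ≤ y) (hyx : y ≤ x)
    (hC : M - x + y ≠ 0) (hD : M - x - y ≠ 0) :
    |4 * M * x * y / (Real.pi * (M ^ 2 - (x - y) ^ 2) * (M ^ 2 - (x + y) ^ 2))|
        / (x ^ 3 * y ^ 3)
      ≤ 32 / (Real.pi * M ^ 3) *
        (1 / y ^ 2 * (1 / (M + y - x) ^ 2 + 1 / (M - y - x) ^ 2 + 2 / x ^ 2)) := by
  have hπ := Real.pi_pos
  have hMpos : 0 < M := lt_of_lt_of_le one_pos hM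
  have hxpos : 0 < x := lt_of_lt_of_le one_pos hx
  have hypos : 0 < y := lt_of_lt_of_le one_pos hy
  have hPC : 0 < |M - x + y| := abs_pos.2 hC
  have hPD : 0 < |M - x - y| := abs_pos.2 hD
  have hBpos : 0 < M + x - y := by linarith
  have hApos : 0 < M + x + y := by linarith
  have hfac : Real.pi * (M ^ 2 - (x - y) ^ 2) * (M ^ 2 - (x + y) ^ 2)
      = Real.pi * ((M + x - y) * (M - x + y)) * ((M + x + y) * (M - x - y)) := by ring
  have habs : |4 * M * x * y / (Real.pi * (M ^ 2 - (x - y) ^ 2) * (M ^ 2 - (x + y) ^ 2))|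
      = 4 * M * x * y / (Real.pi * ((M + x - y) * |M - x + y|)
          * ((M + x + y) * |M - x - y|)) := by
    rw [hfac, abs_div, abs_of_pos (show (0:ℝ) < 4 * M * x * y by positivity)]
    congr 1
    rw [abs_mul, abs_mul, abs_mul, abs_mul, abs_of_pos hπ, abs_of_pos hBpos, abs_of_pos hApos]
  have hCsq : (M + y - x) ^ 2 = |M - x + y| ^ 2 := by rw [sq_abs]; ring
  have hDsq : (M - y - x) ^ 2 = |M - x - y| ^ 2 := by rw [sq_abs]; ring
  have hMC : M ≤ 2 * (x + |M - x + y|) := by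
    rcases abs_cases (M - x + y) with ⟨hEq, _⟩ | ⟨hEq, hlt⟩ <;> rw [hEq] <;> linarith
  have hMD : M ≤ 2 * (x + |M - x - y|) := by
    rcases abs_cases (M - x - y) with ⟨hEq, hge⟩ | ⟨hEq, hlt⟩ <;> rw [hEq] <;> linarith
  have k1 : 1 / (|M - x + y| ^ 2 * x ^ 2)
      ≤ 16 / M ^ 2 * (1 / |M - x + y| ^ 2 + 1 / x ^ 2) :=
    key_lemma hPC hxpos hMpos (by linarith)
  have k2 : 1 / (|M - x - y| ^ 2 * x ^ 2)
      ≤ 16 / M ^ 2 * (1 / |M - x - y| ^ 2 + 1 / x ^ 2) :=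
    key_lemma hPD hxpos hMpos (by linarith)
  have hAM : 1 / |M - x + y| * (1 / |M - x - y|)
      ≤ 1 / 2 * (1 / |M - x + y| ^ 2 + 1 / |M - x - y| ^ 2) := by
    have hs := sq_nonneg (1 / |M - x + y| - 1 / |M - x - y|)
    have e1 : (1 / |M - x + y|) ^ 2 = 1 / |M - x + y| ^ 2 := by ring
    have e2 : (1 / |M - x - y|) ^ 2 = 1 / |M - x - y| ^ 2 := by ring
    nlinarith [hs]
  rw [habs, hCsq, hDsq]
  calc 4 * M * x * y / (Real.pi * ((M + x - y) * |M - x + y|)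
          * ((M + x + y) * |M - x - y|)) / (x ^ 3 * y ^ 3)
      = 4 * M * x * y / (Real.pi * ((M + x - y) * |M - x + y|)
          * ((M + x + y) * |M - x - y|) * (x ^ 3 * y ^ 3)) := by rw [div_div]
    _ ≤ 4 * M * x * y / (Real.pi * (M * |M - x + y|)
          * (M * |M - x - y|) * (x ^ 3 * y ^ 3)) := by
        gcongr
        · linarith
        · linarith
    _ = 4 / (Real.pi * M) * (1 / |M - x + y| * (1 / |M - x - y|))
          * (1 / x ^ 2 * (1 / y ^ 2)) := by
        field_simp
    _ ≤ 4 / (Real.pi * M) * (1 / 2 * (1 / |M - x + y| ^ 2 + 1 / |M - x - y| ^ 2))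
          * (1 / x ^ 2 * (1 / y ^ 2)) := by
        refine mul_le_mul_of_nonneg_right (mul_le_mul_of_nonneg_left hAM ?_) ?_
        · positivity
        · positivity
    _ = 2 / (Real.pi * M) * (1 / (|M - x + y| ^ 2 * x ^ 2)
          + 1 / (|M - x - y| ^ 2 * x ^ 2)) * (1 / y ^ 2) := by ring
    _ ≤ 2 / (Real.pi * M) * (16 / M ^ 2 * (1 / |M - x + y| ^ 2 + 1 / x ^ 2)
          + 16 / M ^ 2 * (1 / |M - x - y| ^ 2 + 1 / x ^ 2)) * (1 / y ^ 2) := by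
        refine mul_le_mul_of_nonneg_right (mul_le_mul_of_nonneg_left (add_le_add k1 k2) ?_) ?_
        · positivity
        · positivity
    _ = 32 / (Real.pi * M ^ 3) *
          (1 / y ^ 2 * (1 / |M - x + y| ^ 2 + 1 / |M - x - y| ^ 2 + 2 / x ^ 2)) := by ring

lemma core (m a b : ℕ) (hm : 0 < m) (ha : 0 < a) (hb : 0 < b) (hba : b ≤ a)
    (hC : (m : ℝ) - a + b ≠ 0) (hD : (m : ℝ) - a - b ≠ 0) :
    |4 * (m : ℝ) * a * b /
        (Real.pi * ((m : ℝ) ^ 2 - ((a : ℝ) - b) ^ 2) * ((m : ℝ) ^ 2 - ((a : ℝ) + b) ^ 2))|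
      / ((a : ℝ) ^ 3 * (b : ℝ) ^ 3)
      ≤ 32 / (Real.pi * (m : ℝ) ^ 3) * Phi m (b, a) := by
  have hM : (1 : ℝ) ≤ m := by exact_mod_cast hm
  have hx : (1 : ℝ) ≤ a := by exact_mod_cast ha
  have hy : (1 : ℝ) ≤ b := by exact_mod_cast hb
  have hyx : (b : ℝ) ≤ a := by exact_mod_cast hba
  have := core_real (m : ℝ) (a : ℝ) (b : ℝ) hM hx hy hyx hC hD
  simpa [Phi] using this

lemma pointwise (m : ℕ) (hm : 0 < m) (p : ℕ × ℕ) :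
    (if 0 < p.1 ∧ 0 < p.2 ∧ (m:ℝ) + p.1 + p.2 ≠ 0 ∧ (m:ℝ) + p.1 - p.2 ≠ 0 ∧
        (m:ℝ) - p.1 + p.2 ≠ 0 ∧ (m:ℝ) - p.1 - p.2 ≠ 0 then
      |4 * (m:ℝ) * p.1 * p.2 /
          (Real.pi * ((m:ℝ)^2 - ((p.1:ℝ) - p.2)^2) * ((m:ℝ)^2 - ((p.1:ℝ) + p.2)^2))|
        / ((p.1:ℝ)^3 * (p.2:ℝ)^3)
    else 0)
      ≤ 32 / (Real.pi * (m : ℝ) ^ 3) * (Phi m p.swap + Phi m p) := by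
  obtain ⟨a, b⟩ := p
  simp only [Prod.swap_prod_mk]
  have hK : 0 ≤ 32 / (Real.pi * (m : ℝ) ^ 3) := by positivity
  split_ifs with h
  · obtain ⟨ha, hb, hA, hB, hC, hD⟩ := h
    rcases le_total b a with hba | hab
    · calc |4 * (m:ℝ) * a * b /
            (Real.pi * ((m:ℝ)^2 - ((a:ℝ) - b)^2) * ((m:ℝ)^2 - ((a:ℝ) + b)^2))|
          / ((a:ℝ)^3 * (b:ℝ)^3)
          ≤ 32 / (Real.pi * (m : ℝ) ^ 3) * Phi m (b, a) := core m a b hm ha hb hba hC hD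
        _ ≤ 32 / (Real.pi * (m : ℝ) ^ 3) * (Phi m (b, a) + Phi m (a, b)) :=
          mul_le_mul_of_nonneg_left (le_add_of_nonneg_right (Phi_nonneg m (a, b))) hK
    · have hC' : (m : ℝ) - b + a ≠ 0 := fun h0 => hB (by linarith)
      have hD' : (m : ℝ) - b - a ≠ 0 := fun h0 => hD (by linarith)
      have hsym : |4 * (m:ℝ) * a * b /
            (Real.pi * ((m:ℝ)^2 - ((a:ℝ) - b)^2) * ((m:ℝ)^2 - ((a:ℝ) + b)^2))|
          / ((a:ℝ)^3 * (b:ℝ)^3)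
          = |4 * (m:ℝ) * b * a /
            (Real.pi * ((m:ℝ)^2 - ((b:ℝ) - a)^2) * ((m:ℝ)^2 - ((b:ℝ) + a)^2))|
          / ((b:ℝ)^3 * (a:ℝ)^3) := by
        rw [show 4 * (m:ℝ) * a * b /
            (Real.pi * ((m:ℝ)^2 - ((a:ℝ) - b)^2) * ((m:ℝ)^2 - ((a:ℝ) + b)^2))
            = 4 * (m:ℝ) * b * a /
            (Real.pi * ((m:ℝ)^2 - ((b:ℝ) - a)^2) * ((m:ℝ)^2 - ((b:ℝ) + a)^2)) from by ring,
          show ((a:ℝ)^3 * (b:ℝ)^3) = ((b:ℝ)^3 * (a:ℝ)^3) from by ring]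
      rw [hsym]
      calc |4 * (m:ℝ) * b * a /
            (Real.pi * ((m:ℝ)^2 - ((b:ℝ) - a)^2) * ((m:ℝ)^2 - ((b:ℝ) + a)^2))|
          / ((b:ℝ)^3 * (a:ℝ)^3)
          ≤ 32 / (Real.pi * (m : ℝ) ^ 3) * Phi m (a, b) := core m b a hm hb ha hab hC' hD'
        _ ≤ 32 / (Real.pi * (m : ℝ) ^ 3) * (Phi m (b, a) + Phi m (a, b)) :=
          mul_le_mul_of_nonneg_left (le_add_of_nonneg_left (Phi_nonneg m (b, a))) hK
  · exact mul_nonneg hK (add_nonneg (Phi_nonneg _ _) (Phi_nonneg _ _))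

/-- Base case of Lemma 7 (inequality 4.15): the interaction coefficients
`v(m, m1, m2)` weighted by cubic decay in `m1, m2` sum to at most `C/m³`. -/
theorem interaction_sum_cubic_decay :
    ∃ C : ℝ, 0 < C ∧ ∀ m : ℕ, 0 < m →
      (∑' p : ℕ × ℕ,
        if 0 < p.1 ∧ 0 < p.2 ∧ (m:ℝ) + p.1 + p.2 ≠ 0 ∧ (m:ℝ) + p.1 - p.2 ≠ 0 ∧
            (m:ℝ) - p.1 + p.2 ≠ 0 ∧ (m:ℝ) - p.1 - p.2 ≠ 0 then
          |4 * (m:ℝ) * p.1 * p.2 /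
              (Real.pi * ((m:ℝ)^2 - ((p.1:ℝ) - p.2)^2) * ((m:ℝ)^2 - ((p.1:ℝ) + p.2)^2))|
            / ((p.1:ℝ)^3 * (p.2:ℝ)^3)
        else 0)
      ≤ C / (m:ℝ)^3 := by
  refine ⟨256 * Sconst ^ 2 / Real.pi + 1, by positivity, ?_⟩
  intro m hm
  have hπ := Real.pi_pos
  have hmR : (0 : ℝ) < m := by exact_mod_cast hm
  have hswap : Summable (fun p : ℕ × ℕ => Phi m p.swap) := by
    have he : (fun p : ℕ × ℕ => Phi m p.swap) = (Phi m) ∘ ⇑(Equiv.prodComm ℕ ℕ) := rfl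
    rw [he, Equiv.summable_iff]
    exact Phi_summable m
  have hg : Summable (fun p : ℕ × ℕ =>
      32 / (Real.pi * (m : ℝ) ^ 3) * (Phi m p.swap + Phi m p)) :=
    (hswap.add (Phi_summable m)).mul_left _
  have hK : 0 ≤ 32 / (Real.pi * (m : ℝ) ^ 3) := by positivity
  have hFsummable : Summable (fun p : ℕ × ℕ =>
      if 0 < p.1 ∧ 0 < p.2 ∧ (m:ℝ) + p.1 + p.2 ≠ 0 ∧ (m:ℝ) + p.1 - p.2 ≠ 0 ∧
          (m:ℝ) - p.1 + p.2 ≠ 0 ∧ (m:ℝ) - p.1 - p.2 ≠ 0 then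
        |4 * (m:ℝ) * p.1 * p.2 /
            (Real.pi * ((m:ℝ)^2 - ((p.1:ℝ) - p.2)^2) * ((m:ℝ)^2 - ((p.1:ℝ) + p.2)^2))|
          / ((p.1:ℝ)^3 * (p.2:ℝ)^3)
      else 0) := by
    refine Summable.of_nonneg_of_le (fun p => ?_) (fun p => pointwise m hm p) hg
    split_ifs
    · positivity
    · exact le_rfl
  refine le_trans (Summable.tsum_le_tsum (fun p => pointwise m hm p) hFsummable hg) ?_
  have hswapsum : ∑' p : ℕ × ℕ, Phi m p.swap = ∑' p : ℕ × ℕ, Phi m p :=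
    (Equiv.prodComm ℕ ℕ).tsum_eq (Phi m)
  calc ∑' p : ℕ × ℕ, 32 / (Real.pi * (m : ℝ) ^ 3) * (Phi m p.swap + Phi m p)
      = 32 / (Real.pi * (m : ℝ) ^ 3) * ∑' p : ℕ × ℕ, (Phi m p.swap + Phi m p) :=
        tsum_mul_left
    _ = 32 / (Real.pi * (m : ℝ) ^ 3) *
          (∑' p : ℕ × ℕ, Phi m p.swap + ∑' p : ℕ × ℕ, Phi m p) := by
        rw [Summable.tsum_add hswap (Phi_summable m)]
    _ ≤ 32 / (Real.pi * (m : ℝ) ^ 3) * (4 * Sconst * Sconst + 4 * Sconst * Sconst) := by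
        rw [hswapsum]
        exact mul_le_mul_of_nonneg_left (add_le_add (Phi_tsum_le m) (Phi_tsum_le m)) hK
    _ = (256 * Sconst ^ 2 / Real.pi) / (m : ℝ) ^ 3 := by
        field_simp
        ring
    _ ≤ (256 * Sconst ^ 2 / Real.pi + 1) / (m : ℝ) ^ 3 := by
        have h3 : (0:ℝ) < (m : ℝ) ^ 3 := by positivity
        exact (div_le_div_iff_of_pos_right h3).2 (by linarith)
end

section
/- Let u : ℤ × ℕ⁺ → ℂ be a doubly-indexed sequence satisfying the recursion u^{(k)} determined by: u^{(0)}_{n,m} = q·(δ_{n,1}+δ_{n,−1})·δ_{m,1}, and for k ≥ 1, u^{(k)}_{n,m} is a finite sum over decompositions n = n1 + n2, k1 + k2 = k − 1, of terms proportional to v(m,m1,m2)·u^{(k1)}_{n1,m1}·u^{(k2)}_{n2,m2} (with v(m,m1,m2) = 0 unless m + m1 + m2 is odd), plus linear terms l^{(r)}_{n,m} u^{(k−r)}_{n,m} for 2 ≤ r ≤ k−1. Then for all (n,m) ≠ (±1,1): u^{(k)}_{n,m} = 0 whenever |n| > k + 1 or m is even. -/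
/-!
By strong induction on `k`, every nonzero `u^{(k)}_{n,m}` has `|n| ≤ k + 1` and `m` odd; the
exceptional points `(±1, 1)` satisfy both conditions, so this is the claim. Functions supported in
`{|n| ≤ N, m odd}` are closed under sums, series and multiplication by arbitrary coefficients. In a
quadratic term the frequencies add, `|n₁| + |n - n₁| ≤ (k₁ + 1) + (k₂ + 1) = k + 1`, and `v` vanishes
unless `m + m₁ + m₂` is odd, so odd `m₁`, `m₂` force `m` odd. The linear counterterms only involve
lower orders at the same `(n, m)`.
-/

def HasOddSupportWithin {R : Type*} [Zero R] (w : ℤ → ℕ → R) (N : ℕ) : Prop :=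
  ∀ n m, w n m ≠ 0 → |n| ≤ N ∧ Odd m

namespace HasOddSupportWithin

variable {R ι : Type*}

theorem of_forall_eq_zero [Zero R] {w : ℤ → ℕ → R} {N : ℕ}
    (h : ∀ (n : ℤ) (m : ℕ), ¬(|n| ≤ (N : ℤ) ∧ Odd m) → w n m = 0) : HasOddSupportWithin w N :=
  fun n m => not_imp_comm.1 (h n m)

theorem eq_zero [Zero R] {w : ℤ → ℕ → R} {N : ℕ} (hw : HasOddSupportWithin w N) {n : ℤ} {m : ℕ}
    (h : ¬(|n| ≤ (N : ℤ) ∧ Odd m)) : w n m = 0 :=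
  not_imp_comm.1 (hw n m) h

theorem mono [Zero R] {w : ℤ → ℕ → R} {N N' : ℕ} (hw : HasOddSupportWithin w N) (hN : N ≤ N') :
    HasOddSupportWithin w N' := fun n m hne =>
  (hw n m hne).imp_left fun hn => hn.trans (by exact_mod_cast hN)

theorem mul_left [MulZeroClass R] {w : ℤ → ℕ → R} {N : ℕ} (a : ℤ → ℕ → R)
    (hw : HasOddSupportWithin w N) : HasOddSupportWithin (fun n m => a n m * w n m) N :=
  fun n m hne => hw n m (right_ne_zero_of_mul hne)

theorem add [AddZeroClass R] {w w' : ℤ → ℕ → R} {N : ℕ} (hw : HasOddSupportWithin w N)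
    (hw' : HasOddSupportWithin w' N) : HasOddSupportWithin (fun n m => w n m + w' n m) N :=
  of_forall_eq_zero fun _ _ h => by rw [hw.eq_zero h, hw'.eq_zero h, add_zero]

theorem finsetSum [AddCommMonoid R] {w : ι → ℤ → ℕ → R} {N : ℕ} (s : Finset ι)
    (hw : ∀ i ∈ s, HasOddSupportWithin (w i) N) :
    HasOddSupportWithin (fun n m => ∑ i ∈ s, w i n m) N :=
  of_forall_eq_zero fun _ _ h => Finset.sum_eq_zero fun i hi => (hw i hi).eq_zero h

theorem tsum [AddCommMonoid R] [TopologicalSpace R] {w : ι → ℤ → ℕ → R} {N : ℕ}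
    (hw : ∀ i, HasOddSupportWithin (w i) N) :
    HasOddSupportWithin (fun n m => ∑' i, w i n m) N :=
  of_forall_eq_zero fun _ _ h => (tsum_congr fun i => (hw i).eq_zero h).trans tsum_zero

theorem quadratic [MulZeroClass R] {w₁ w₂ : ℤ → ℕ → R} {N₁ N₂ : ℕ} {v : ℕ → ℕ → ℕ → R}
    (hv : ∀ m m₁ m₂, Even (m + m₁ + m₂) → v m m₁ m₂ = 0)
    (hw₁ : HasOddSupportWithin w₁ N₁) (hw₂ : HasOddSupportWithin w₂ N₂) (n₁ : ℤ) (m₁ m₂ : ℕ) :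
    HasOddSupportWithin (fun n m => v m m₁ m₂ * (w₁ n₁ m₁ * w₂ (n - n₁) m₂)) (N₁ + N₂) := by
  intro n m hne
  obtain ⟨hn₁, hm₁⟩ := hw₁ n₁ m₁ (left_ne_zero_of_mul (right_ne_zero_of_mul hne))
  obtain ⟨hn₂, hm₂⟩ := hw₂ (n - n₁) m₂ (right_ne_zero_of_mul (right_ne_zero_of_mul hne))
  have hodd : ¬Even (m + m₁ + m₂) := fun h =>
    left_ne_zero_of_mul hne (hv m m₁ m₂ h)
  constructor
  · calc |n| = |n₁ + (n - n₁)| := by rw [add_sub_cancel]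
      _ ≤ |n₁| + |n - n₁| := abs_add_le _ _
      _ ≤ ↑(N₁ + N₂) := by push_cast; linarith
  · rw [Nat.odd_iff] at hm₁ hm₂ ⊢
    rw [Nat.even_iff] at hodd
    omega

end HasOddSupportWithin

theorem hasOddSupportWithin_one_ite_endpoints {R : Type*} [Zero R] (q : R) :
    HasOddSupportWithin (fun n m => if (n = 1 ∨ n = -1) ∧ m = 1 then q else 0) 1 := by
  intro n m hne
  obtain ⟨hn | hn, rfl⟩ := (ite_ne_right_iff.1 hne).1 <;> subst hn <;> norm_num

/-- Lemma 1 of the paper: for the Lindstedt coefficients `u^{(k)}_{n,m}` defined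
by the recursion 2.2, one has `u^{(k)}_{n,m} = 0` whenever `|n| > k + 1` or `m`
is even, for `(n, m) ≠ (±1, 1)`. -/
theorem lindstedt_coefficients_support (q : ℂ) (u : ℕ → ℤ → ℕ → ℂ)
    (v : ℕ → ℕ → ℕ → ℂ) (l : ℕ → ℤ → ℕ → ℂ)
    (c : ℕ → ℤ → ℕ → ℕ → ℤ → ℕ → ℕ → ℂ)
    (hv : ∀ m m1 m2 : ℕ, Even (m + m1 + m2) → v m m1 m2 = 0)
    (h0 : ∀ (n : ℤ) (m : ℕ), u 0 n m = if (n = 1 ∨ n = -1) ∧ m = 1 then q else 0)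
    (hrec : ∀ k : ℕ, 1 ≤ k → ∀ (n : ℤ) (m : ℕ),
      u k n m =
        (∑ k1 ∈ Finset.range k, ∑' n1 : ℤ, ∑' m1 : ℕ, ∑' m2 : ℕ,
          c k n m k1 n1 m1 m2 * v m m1 m2 * u k1 n1 m1 * u (k - 1 - k1) (n - n1) m2)
        + ∑ r ∈ Finset.Icc 2 (k - 1), l r n m * u (k - r) n m) :
    ∀ (k : ℕ) (n : ℤ) (m : ℕ), ¬((n = 1 ∨ n = -1) ∧ m = 1) →
      ((k : ℤ) + 1 < |n| ∨ Even m) → u k n m = 0 := by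
  have hsupp : ∀ k, HasOddSupportWithin (u k) (k + 1) := by
    intro k
    induction k using Nat.strong_induction_on with
    | _ k ih =>
    rcases k with _ | k
    · simpa only [funext₂ h0] using hasOddSupportWithin_one_ite_endpoints q
    rw [funext₂ (hrec (k + 1) k.succ_pos)]
    simp only [mul_assoc]
    refine .add (.finsetSum _ fun k1 hk1 => .tsum fun n1 => .tsum fun m1 => .tsum fun m2 => ?_)
      (.finsetSum _ fun r hr => ?_)
    · rw [Finset.mem_range] at hk1
      have hquad := HasOddSupportWithin.quadratic hv (ih k1 hk1) (ih (k - k1) (by omega)) n1 m1 m2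
      exact .mul_left _ (hquad.mono (by omega))
    · rw [Finset.mem_Icc] at hr
      exact .mul_left _ ((ih (k + 1 - r) (by omega)).mono (by omega))
  intro k n m _ hcond
  by_contra hne
  obtain ⟨hn, hm⟩ := hsupp k n m hne
  rcases hcond with hlt | heven
  · push_cast at hn; linarith
  · exact Nat.not_even_iff_odd.2 hm heven
end

section
/- Fix γ ∈ (0, 2^{−6}], τ₀ ≥ 4, and μ ∈ [0, 1/8] such that |ω₁ n − ω_m| ≥ γ|n|^{−τ₀} for all nonzero integers n and all integers m ≥ 2, where ω₁ = √(1+μ) and ω_m = √(m⁴+μ). Let Ω = ω₁ + ε with 0 < ε < ε₀, and ν : (pairs) → ℝ with |ν_{n,m}| ≤ Cε₀. Suppose |Ω n − √(ω_m² + n ν_{n,m})| ≤ 2γ|n|^{−τ₀} for some n ≠ 0, m ≥ 2 with m ≤ c₂√|n|. Then |n| ≥ (2γ/(C' ε₀))^{1/(τ₀+1)} for a constant C' depending only on c₂, C. -/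
/-!
The unperturbed small divisor `|ω₁ |n| - ω_m|` is at least `4γ|n|^{-τ₀}`, while the triangle
inequality bounds it by the perturbed one (at most `2γ|n|^{-τ₀}`), plus the frequency shift
`ε|n|`, plus the shift `|√(ω_m² + nν) - ω_m| ≤ |nν|/ω_m ≤ |n| C ε₀ / 4` (as `ω_m ≥ 4`).
Hence `2γ|n|^{-τ₀} ≤ (1 + C/4) ε₀ |n|`, which is the claim after taking `(τ₀ + 1)`-th roots.
-/

open Real

lemma abs_sqrt_sub_sqrt_le_div {a b d : ℝ} (ha : 0 ≤ a) (hd : 0 < d) (hdb : d ≤ √b) :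
    |√a - √b| ≤ |a - b| / d := by
  have hb : 0 ≤ b := sqrt_pos.mp (hd.trans_le hdb) |>.le
  have hprod : (√a - √b) * (√a + √b) = a - b := by
    rw [← sq_sqrt ha, ← sq_sqrt hb, sqrt_sq (sqrt_nonneg a), sqrt_sq (sqrt_nonneg b)]; ring
  rw [le_div_iff₀ hd, ← hprod, abs_mul, abs_of_nonneg (by positivity : 0 ≤ √a + √b)]
  gcongr
  linarith [sqrt_nonneg a]

lemma abs_sqrt_add_sub_sqrt_le {b t : ℝ} (hb : 16 ≤ b) (hbt : 0 ≤ b + t) :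
    |√(b + t) - √b| ≤ |t| / 4 := by
  have h4 : 4 ≤ √b := (le_sqrt' four_pos).mpr (by linarith)
  simpa using abs_sqrt_sub_sqrt_le_div hbt four_pos h4

lemma rpow_one_div_le_of_mul_rpow_neg_le {x a b τ : ℝ} (hx : 0 < x) (ha : 0 ≤ a) (hb : 0 < b)
    (hτ : 0 < τ + 1) (h : a * x ^ (-τ) ≤ b * x) : (a / b) ^ (1 / (τ + 1)) ≤ x := by
  rw [one_div, rpow_inv_le_iff_of_pos (by positivity) hx.le hτ, div_le_iff₀ hb]
  calc a = a * x ^ (-τ) * x ^ τ := by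
        rw [mul_assoc, ← rpow_add hx, neg_add_cancel, rpow_zero, mul_one]
    _ ≤ b * x * x ^ τ := by gcongr
    _ = x ^ (τ + 1) * b := by rw [rpow_add hx, rpow_one]; ring

theorem near_resonance_forces_large_n_general (c₂ C : ℝ) (hC : 0 < C) :
    ∃ C' : ℝ, 0 < C' ∧
      ∀ (γ τ₀ μ ε ε₀ Ω : ℝ) (ν : ℤ → ℕ → ℝ) (n : ℤ) (m : ℕ),
        0 < γ → γ ≤ (2:ℝ) ^ (-6 : ℤ) → 4 ≤ τ₀ → 0 ≤ μ → μ ≤ 1/8 →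
        (∀ (n' : ℤ) (m' : ℕ), n' ≠ 0 → 2 ≤ m' →
          4 * γ * |(n':ℝ)| ^ (-τ₀)
            ≤ |Real.sqrt (1 + μ) * |(n':ℝ)| - Real.sqrt ((m':ℝ)^4 + μ)|) →
        Ω = Real.sqrt (1 + μ) + ε → 0 < ε → ε < ε₀ →
        (∀ (n' : ℤ) (m' : ℕ), |ν n' m'| ≤ C * ε₀) →
        n ≠ 0 → 2 ≤ m → (m:ℝ) ≤ c₂ * Real.sqrt |(n:ℝ)| →
        0 ≤ (m:ℝ)^4 + μ + (n:ℝ) * ν n m →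
        abs (|Ω * (n:ℝ)| - Real.sqrt ((m:ℝ)^4 + μ + (n:ℝ) * ν n m))
            ≤ 2 * γ * |(n:ℝ)| ^ (-τ₀) →
        (2 * γ / (C' * ε₀)) ^ (1 / (τ₀ + 1)) ≤ |(n:ℝ)| := by
  refine ⟨1 + C / 4, by positivity, ?_⟩
  intro γ τ₀ μ ε ε₀ Ω ν n m hγ _ hτ₀ hμ _ hdioph hΩ hε hεε₀ hν hn hm _ hdisc hnear
  set N := |(n : ℝ)|
  set s := √((m : ℝ) ^ 4 + μ + n * ν n m)
  set w := √((m : ℝ) ^ 4 + μ)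
  have hN : 0 < N := by positivity
  have hε₀ : 0 < ε₀ := hε.trans hεε₀
  have hm4 : 16 ≤ (m : ℝ) ^ 4 + μ := by
    have : (2 : ℝ) ^ 4 ≤ (m : ℝ) ^ 4 := by gcongr; exact_mod_cast hm
    linarith
  have hshift : |s - w| ≤ N * (C * ε₀) / 4 := by
    refine (abs_sqrt_add_sub_sqrt_le hm4 hdisc).trans ?_
    rw [abs_mul]
    gcongr
    exact hν n m
  have hΩn : |Ω * n| = √(1 + μ) * N + ε * N := by
    rw [abs_mul, abs_of_pos (by rw [hΩ]; positivity), hΩ, add_mul]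
  have hmismatch : 4 * γ * N ^ (-τ₀) ≤ 2 * γ * N ^ (-τ₀) + ε * N + N * (C * ε₀) / 4 :=
    calc 4 * γ * N ^ (-τ₀) ≤ |√(1 + μ) * N - w| := hdioph n m hn hm
      _ = |(|Ω * n| - s) + -(ε * N) + (s - w)| := by rw [hΩn]; ring_nf
      _ ≤ |(|Ω * n| - s)| + |-(ε * N)| + |s - w| := abs_add_three _ _ _
      _ ≤ 2 * γ * N ^ (-τ₀) + ε * N + N * (C * ε₀) / 4 := by
        rw [abs_neg, abs_of_pos (mul_pos hε hN)]
        linarith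
  have hεN : ε * N ≤ ε₀ * N := by gcongr
  refine rpow_one_div_le_of_mul_rpow_neg_le hN (by positivity) (by positivity) (by linarith) ?_
  linarith

/-- Estimates 6.4–6.5: a near-resonance of the perturbed frequencies forces
`|n| ≥ (2γ/(C'ε₀))^{1/(τ₀+1)}`, with `C'` depending only on `c₂, C`. -/
theorem near_resonance_forces_large_n (c₂ C : ℝ) (hc₂ : 0 < c₂) (hC : 0 < C) :
    ∃ C' : ℝ, 0 < C' ∧
      ∀ (γ τ₀ μ ε ε₀ Ω : ℝ) (ν : ℤ → ℕ → ℝ) (n : ℤ) (m : ℕ),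
        0 < γ → γ ≤ (2:ℝ) ^ (-6 : ℤ) → 4 ≤ τ₀ → 0 ≤ μ → μ ≤ 1/8 →
        (∀ (n' : ℤ) (m' : ℕ), n' ≠ 0 → 2 ≤ m' →
          4 * γ * |(n':ℝ)| ^ (-τ₀)
            ≤ |Real.sqrt (1 + μ) * |(n':ℝ)| - Real.sqrt ((m':ℝ)^4 + μ)|) →
        Ω = Real.sqrt (1 + μ) + ε → 0 < ε → ε < ε₀ →
        (∀ (n' : ℤ) (m' : ℕ), |ν n' m'| ≤ C * ε₀) →
        n ≠ 0 → 2 ≤ m → (m:ℝ) ≤ c₂ * Real.sqrt |(n:ℝ)| →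
        0 ≤ (m:ℝ)^4 + μ + (n:ℝ) * ν n m →
        abs (|Ω * (n:ℝ)| - Real.sqrt ((m:ℝ)^4 + μ + (n:ℝ) * ν n m))
            ≤ 2 * γ * |(n:ℝ)| ^ (-τ₀) →
        (2 * γ / (C' * ε₀)) ^ (1 / (τ₀ + 1)) ≤ |(n:ℝ)| :=
  near_resonance_forces_large_n_general c₂ C hC
end
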